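/- Let s ≥ 1, 1 ≤ m ≤ n integers with m = s. Suppose h_1 is a C2-admissible function of decreasing type with parameter m and h_2(ℓ) = h_{m,n}(ℓ) - h_1(m+n-2-ℓ) is C2-admissible with parameter s_2 ≤ m. Let t_1 = inf{ℓ ≥ m : h_1(ℓ) < m}, b_2 = sup{ℓ : h_2(ℓ) > 0}, s_1 = m. If the 'gap condition' t_1 - s_1 ≥ b_2 + 3 fails and likewise t_2 - s_2 ≥ b_1 + 3 fails (with t_2, b_1 defined analogously), then the h-vector h_{m,n} of the complete intersection has genus ∑_{ℓ≥2}(ℓ-1)h_{m,n}(ℓ) at least as large as ∑_{ℓ≥2}(ℓ-1)h(ℓ) for any C2-admissible h of decreasing type with parameter ≥ m and ∑_ℓ h(ℓ) = m·n. -/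

import Mathlib

def C2Admissible (h : ℤ → ℤ) (s : ℤ) : Prop :=
  1 ≤ s ∧ (∀ n < 0, h n = 0) ∧ (∀ n, 0 ≤ n → n ≤ s - 1 → h n = n + 1) ∧
  (∀ n, s - 1 ≤ n → h (n + 1) ≤ h n) ∧ (∃ N, ∀ n ≥ N, h n = 0)

def DecreasingType (h : ℤ → ℤ) : Prop :=
  ∀ a, h (a + 1) < h a → ∀ n, a ≤ n → h (n + 1) < h n ∨ h n = 0

noncomputable def genus (h : ℤ → ℤ) : ℤ :=
  ∑ᶠ n : ℤ, if 2 ≤ n then (n - 1) * h n else 0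

def hCI (m n ℓ : ℤ) : ℤ :=
  if 0 ≤ ℓ ∧ ℓ ≤ m - 1 then ℓ + 1
  else if m - 1 ≤ ℓ ∧ ℓ ≤ n - 1 then m
  else if n - 1 ≤ ℓ ∧ ℓ ≤ m + n - 1 then m + n - 1 - ℓ
  else 0

/-!
Summation by parts writes the genus as `∑ ℓ ≥ 1, ∑ k > ℓ, h k`, so it suffices to bound every
tail of `h` by the corresponding tail of `hCI m n`. Both have degree `m * n`, so this holds as soon
as `h ≥ hCI m n` up to `ℓ`, which is the case unless `ℓ` lies past the parameter and
`h ℓ < min m (m + n - 1 - ℓ)` (or `h ℓ = 0`, when the tail of `h` vanishes). In that case decreasing type forces `h` to drop by at least one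
at every step after `ℓ`, so its tail is at most `(h ℓ - 1) + ⋯ + 1`, and `hCI m n` ends with a
staircase of this shape after `ℓ`.
-/

open Finset

lemma sum_Ioc_add_sum_Ioc {α M : Type*} [LinearOrder α] [LocallyFiniteOrder α] [AddCommMonoid M]
    (f : α → M) {a b c : α} (hab : a ≤ b) (hbc : b ≤ c) :
    ∑ k ∈ Ioc a b, f k + ∑ k ∈ Ioc b c, f k = ∑ k ∈ Ioc a c, f k := by
  rw [← sum_union (Ioc_disjoint_Ioc_of_le le_rfl), Ioc_union_Ioc_eq_Ioc hab hbc]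

lemma sum_Ioc_le_sum_Ioc_of_head_le {α M : Type*} [LinearOrder α] [LocallyFiniteOrder α]
    [AddCommGroup M] [PartialOrder M] [IsOrderedAddMonoid M] {f g : α → M} {a ℓ b : α}
    (haℓ : a ≤ ℓ) (hℓb : ℓ ≤ b) (hsum : ∑ k ∈ Ioc a b, f k = ∑ k ∈ Ioc a b, g k)
    (hhead : ∀ k ∈ Ioc a ℓ, g k ≤ f k) :
    ∑ k ∈ Ioc ℓ b, f k ≤ ∑ k ∈ Ioc ℓ b, g k := by
  rw [← sum_Ioc_add_sum_Ioc f haℓ hℓb, ← sum_Ioc_add_sum_Ioc g haℓ hℓb] at hsum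
  refine le_of_add_le_add_left (a := ∑ k ∈ Ioc a ℓ, f k) ?_
  rw [hsum]
  exact add_le_add_left (sum_le_sum hhead) _

lemma sum_Ioc_comp_add {M : Type*} [AddCommMonoid M] (f : ℤ → M) (a b d : ℤ) :
    ∑ k ∈ Ioc a b, f (k + d) = ∑ k ∈ Ioc (a + d) (b + d), f k := by
  rw [← map_add_right_Ioc, sum_map]
  rfl

lemma sum_Ioc_sum_Ioc_eq_sum_mul (f : ℤ → ℤ) (B : ℤ) :
    ∑ ℓ ∈ Ioc 0 B, ∑ k ∈ Ioc ℓ B, f k = ∑ k ∈ Ioc 0 B, (k - 1) * f k := by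
  rw [sum_comm' (t' := Ioc 0 B) (s' := fun k => Ioc 0 (k - 1))
    (fun ℓ k => by simp only [mem_Ioc]; omega)]
  refine sum_congr rfl fun k hk => ?_
  rw [sum_const, Int.card_Ioc, nsmul_eq_mul, sub_zero,
    Int.toNat_of_nonneg (by rw [mem_Ioc] at hk; omega)]

lemma genus_eq_sum_Ioc_sum_Ioc {h : ℤ → ℤ} {B : ℤ} (hB : ∀ k, B < k → h k = 0) :
    genus h = ∑ ℓ ∈ Ioc 0 B, ∑ k ∈ Ioc ℓ B, h k := by
  have hsupp : (Function.support fun k : ℤ => if 2 ≤ k then (k - 1) * h k else 0) ⊆ Ioc 0 B := by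
    intro k hk
    rw [Function.mem_support] at hk
    rw [coe_Ioc, Set.mem_Ioc]
    by_contra hout
    rcases not_and_or.1 hout with hk0 | hkB
    · exact hk (if_neg (by omega))
    · exact hk (by rw [hB k (by omega), mul_zero, ite_self])
  rw [genus, finsum_eq_sum_of_support_subset _ hsupp, sum_Ioc_sum_Ioc_eq_sum_mul]
  refine sum_congr rfl fun k hk => ?_
  rw [mem_Ioc] at hk
  split_ifs with hk2
  · rfl
  · rw [show k = 1 by omega, sub_self, zero_mul]

lemma exists_apply_succ_lt_of_lt {α : Type*} [LinearOrder α] (f : ℤ → α) {x y : ℤ}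
    (hxy : x ≤ y) (hlt : f y < f x) : ∃ a, x ≤ a ∧ a < y ∧ f (a + 1) < f a := by
  by_contra! hmono
  have hle : ∀ z, x ≤ z → z ≤ y → f x ≤ f z := by
    intro z hxz
    induction z, hxz using Int.leInduction with
    | base => exact fun _ => le_rfl
    | succ z hxz ih => exact fun hzy => (ih (by omega)).trans (hmono z hxz (by omega))
  exact (hle y hxy le_rfl).not_gt hlt

namespace C2Admissible

variable {h : ℤ → ℤ} {s : ℤ}

lemma apply_sub_one (hh : C2Admissible h s) : h (s - 1) = s := by
  have := hh.2.2.1 (s - 1) (by linarith [hh.1]) le_rfl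
  omega

lemma apply_le_apply (hh : C2Admissible h s) {x y : ℤ} (hx : s - 1 ≤ x) (hxy : x ≤ y) :
    h y ≤ h x := by
  induction y, hxy using Int.leInduction with
  | base => exact le_rfl
  | succ y hxy ih => exact (hh.2.2.2.1 y (hx.trans hxy)).trans ih

lemma nonneg (hh : C2Admissible h s) (k : ℤ) : 0 ≤ h k := by
  obtain ⟨-, hneg, hinit, -, N, hN⟩ := id hh
  rcases lt_or_ge k 0 with hk0 | hk0
  · exact (hneg k hk0).ge
  rcases le_or_gt k (s - 1) with hks | hks
  · rw [hinit k hk0 hks]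
    omega
  · have := hh.apply_le_apply hks.le (le_max_right N k)
    rw [hN _ (le_max_left N k)] at this
    exact this

variable (hh : C2Admissible h s) (hdec : DecreasingType h)
include hh hdec

-- Once `h` has dropped below its maximal value `s`, the first drop has happened, and from then on
-- `h` decreases strictly until it vanishes.
lemma apply_succ_le_of_lt {j : ℤ} (hj : s - 1 ≤ j) (hlt : h j < s) :
    h (j + 1) ≤ max (h j - 1) 0 := by
  obtain ⟨a, -, haj, hdrop⟩ := exists_apply_succ_lt_of_lt h hj (by rwa [hh.apply_sub_one])
  have := hh.2.2.2.1 j hj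
  rcases hdec a hdrop j haj.le with h1 | h1 <;> omega

lemma apply_le_max_sub {k ℓ : ℤ} (hk : s - 1 ≤ k) (hkℓ : k ≤ ℓ) (hlt : h k < s) :
    h ℓ ≤ max (h k - (ℓ - k)) 0 := by
  induction ℓ, hkℓ using Int.leInduction with
  | base => simp only [sub_self, sub_zero, le_max_left]
  | succ ℓ hkℓ ih =>
    have := hh.apply_succ_le_of_lt hdec (hk.trans hkℓ) ((hh.apply_le_apply hk hkℓ).trans_lt hlt)
    omega

lemma min_le_apply {k ℓ : ℤ} (hk : s - 1 ≤ k) (hkℓ : k ≤ ℓ) (hpos : 0 < h ℓ) :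
    min s (h ℓ + (ℓ - k)) ≤ h k := by
  by_cases hks : s ≤ h k
  · exact (min_le_left _ _).trans hks
  · have := hh.apply_le_max_sub hdec hk hkℓ (not_le.1 hks)
    omega

end C2Admissible

section hCI

variable {m n : ℤ} (hm : 1 ≤ m) (hmn : m ≤ n)
include hm hmn

lemma hCI_eq_max_min (k : ℤ) : hCI m n k = max 0 (min (k + 1) (min m (m + n - 1 - k))) := by
  unfold hCI
  split_ifs <;> omega

lemma hCI_nonneg (k : ℤ) : 0 ≤ hCI m n k := by
  rw [hCI_eq_max_min hm hmn]
  exact le_max_left _ _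

-- `hCI m n k` counts the pairs `(i, k - i)` in `[0, m) × [0, n)`: it is the coefficient of `t ^ k`
-- in `(1 + ⋯ + t ^ (m - 1)) * (1 + ⋯ + t ^ (n - 1))`.
lemma hCI_eq_sum_ite (k : ℤ) :
    hCI m n k = ∑ i ∈ Ico 0 m, if i ≤ k ∧ k < i + n then 1 else 0 := by
  rw [sum_boole, show {i ∈ Ico 0 m | i ≤ k ∧ k < i + n} = Ico (max 0 (k - n + 1)) (min m (k + 1))
    by ext; simp only [mem_filter, mem_Ico]; omega, Int.card_Ico, hCI_eq_max_min hm hmn]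
  omega

lemma sum_hCI {B : ℤ} (hB : m + n - 2 ≤ B) : ∑ k ∈ Ioc (-1) B, hCI m n k = m * n := by
  have hrow : ∀ i ∈ Ico 0 m, ∑ k ∈ Ioc (-1) B, (if i ≤ k ∧ k < i + n then 1 else 0 : ℤ) = n := by
    intro i hi
    rw [mem_Ico] at hi
    rw [sum_boole, show {k ∈ Ioc (-1) B | i ≤ k ∧ k < i + n} = Ico i (i + n)
      by ext; simp only [mem_filter, mem_Ioc, mem_Ico]; omega, Int.card_Ico]
    omega
  simp_rw [hCI_eq_sum_ite hm hmn]
  rw [sum_comm, sum_congr rfl hrow, sum_const, Int.card_Ico, nsmul_eq_mul, sub_zero,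
    Int.toNat_of_nonneg (by omega)]

lemma hCI_le_apply_of_le_sub_one {h : ℤ → ℤ} {s : ℤ} (hh : C2Admissible h s) {k : ℤ}
    (hk : k ≤ s - 1) : hCI m n k ≤ h k := by
  rw [hCI_eq_max_min hm hmn]
  rcases lt_or_ge k 0 with hk0 | hk0
  · rw [hh.2.1 k hk0]
    omega
  · rw [hh.2.2.1 k hk0 hk]
    omega

variable {h : ℤ → ℤ} {s : ℤ} (hh : C2Admissible h s) (hdec : DecreasingType h) (hms : m ≤ s)
include hh hdec hms

lemma hCI_le_apply_of_le {ℓ : ℤ} (hpos : 0 < h ℓ)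
    (hge : min m (m + n - 1 - ℓ) ≤ h ℓ) {k : ℤ} (hkℓ : k ≤ ℓ) : hCI m n k ≤ h k := by
  rcases le_or_gt k (s - 1) with hks | hks
  · exact hCI_le_apply_of_le_sub_one hm hmn hh hks
  · have := hh.min_le_apply hdec hks.le hkℓ hpos
    rw [hCI_eq_max_min hm hmn]
    omega

-- Past `ℓ` the values of `h` are at most `v - 1, v - 2, …, 1` with `v = h ℓ`, and `hCI m n`
-- ends with exactly this staircase, which starts after `ℓ` because `v < m + n - 1 - ℓ`.
lemma sum_Ioc_le_sum_hCI_of_lt {ℓ B : ℤ} (hℓ : s - 1 ≤ ℓ) (hB : m + n - 1 ≤ B)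
    (hlt : h ℓ < min m (m + n - 1 - ℓ)) :
    ∑ k ∈ Ioc ℓ B, h k ≤ ∑ k ∈ Ioc ℓ B, hCI m n k := by
  set v := h ℓ
  set c := m + n - 1
  have hv0 : 0 ≤ v := hh.nonneg ℓ
  have htail : ∀ k, ℓ ≤ k → h k ≤ max (v - (k - ℓ)) 0 :=
    fun k hk => hh.apply_le_max_sub hdec hℓ hk (by omega)
  have hzero : ∑ k ∈ Ioc (ℓ + v) B, h k = 0 := sum_eq_zero fun k hk => by
    rw [mem_Ioc] at hk
    have := htail k (by omega)
    have := hh.nonneg k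
    omega
  calc ∑ k ∈ Ioc ℓ B, h k
      = ∑ k ∈ Ioc ℓ (ℓ + v), h k := by
        rw [← sum_Ioc_add_sum_Ioc h (by omega : ℓ ≤ ℓ + v) (by omega : ℓ + v ≤ B), hzero, add_zero]
    _ ≤ ∑ k ∈ Ioc ℓ (ℓ + v), (c - (k + (c - v - ℓ))) := sum_le_sum fun k hk => by
        rw [mem_Ioc] at hk
        have := htail k hk.1.le
        omega
    _ = ∑ k ∈ Ioc (c - v) c, (c - k) := by
        rw [sum_Ioc_comp_add (fun k => c - k)]
        congr 2 <;> ring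
    _ = ∑ k ∈ Ioc (c - v) c, hCI m n k := sum_congr rfl fun k hk => by
        rw [mem_Ioc] at hk
        rw [hCI_eq_max_min hm hmn]
        omega
    _ ≤ ∑ k ∈ Ioc ℓ B, hCI m n k :=
        sum_le_sum_of_subset_of_nonneg (fun k hk => by simp only [mem_Ioc] at hk ⊢; omega)
          fun k _ _ => hCI_nonneg hm hmn k

lemma sum_Ioc_le_sum_hCI {B : ℤ} (hB : m + n - 1 ≤ B) (hdeg : ∑ k ∈ Ioc (-1) B, h k = m * n)
    {ℓ : ℤ} (hℓ : -1 ≤ ℓ) (hℓB : ℓ ≤ B) :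
    ∑ k ∈ Ioc ℓ B, h k ≤ ∑ k ∈ Ioc ℓ B, hCI m n k := by
  have of_head : (∀ k ≤ ℓ, hCI m n k ≤ h k) → ∑ k ∈ Ioc ℓ B, h k ≤ ∑ k ∈ Ioc ℓ B, hCI m n k :=
    fun hle => sum_Ioc_le_sum_Ioc_of_head_le hℓ hℓB (hdeg.trans (sum_hCI hm hmn (by omega)).symm)
      fun k hk => hle k (mem_Ioc.1 hk).2
  rcases le_or_gt ℓ (s - 2) with hℓs | hℓs
  · exact of_head fun k hk => hCI_le_apply_of_le_sub_one hm hmn hh (by omega)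
  rcases lt_or_ge (h ℓ) (min m (m + n - 1 - ℓ)) with hlt | hge
  · exact sum_Ioc_le_sum_hCI_of_lt hm hmn hh hdec hms (by omega) hB hlt
  rcases (hh.nonneg ℓ).eq_or_lt with hzero | hpos
  · calc ∑ k ∈ Ioc ℓ B, h k ≤ 0 := sum_nonpos fun k hk => by
          have := hh.apply_le_apply (by omega) (mem_Ioc.1 hk).1.le
          omega
      _ ≤ ∑ k ∈ Ioc ℓ B, hCI m n k := sum_nonneg fun k _ => hCI_nonneg hm hmn k
  · exact of_head fun k hk => hCI_le_apply_of_le hm hmn hh hdec hms hpos hge hk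

end hCI

theorem ci_hvector_maximal_genus_general (m n : ℤ) (hm : 1 ≤ m) (hmn : m ≤ n) :
    ∀ (h : ℤ → ℤ) (s' : ℤ), m ≤ s' → C2Admissible h s' → DecreasingType h →
      (∑ᶠ ℓ : ℤ, h ℓ) = m * n → genus h ≤ genus (hCI m n) := by
  intro h s hms hh hdec hdeg
  obtain ⟨N, hN⟩ := hh.2.2.2.2
  set B := max (m + n) N
  have hz : ∀ k, B < k → h k = 0 := fun k hk => hN k (by omega)
  have hzCI : ∀ k, B < k → hCI m n k = 0 := fun k hk => by
    rw [hCI_eq_max_min hm hmn]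
    omega
  have hsupp : Function.support h ⊆ Ioc (-1) B := fun k hk => by
    rw [coe_Ioc, Set.mem_Ioc]
    by_contra hout
    rcases not_and_or.1 hout with hk0 | hkB
    · exact hk (hh.2.1 k (by omega))
    · exact hk (hz k (by omega))
  rw [finsum_eq_sum_of_support_subset h hsupp] at hdeg
  rw [genus_eq_sum_Ioc_sum_Ioc hz, genus_eq_sum_Ioc_sum_Ioc hzCI]
  exact sum_le_sum fun ℓ hℓ => sum_Ioc_le_sum_hCI hm hmn hh hdec hms (by omega) hdeg
    (by rw [mem_Ioc] at hℓ; omega) (mem_Ioc.1 hℓ).2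

theorem ci_hvector_maximal_genus (m n s₂ : ℤ) (hm : 1 ≤ m) (hmn : m ≤ n)
    (h₁ h₂ : ℤ → ℤ) (hh₁ : C2Admissible h₁ m) (hdec₁ : DecreasingType h₁)
    (hdef : ∀ ℓ, h₂ ℓ = hCI m n ℓ - h₁ (m + n - 2 - ℓ))
    (hh₂ : C2Admissible h₂ s₂) (hs₂ : s₂ ≤ m)
    (t₁ t₂ b₁ b₂ : ℤ)
    (ht₁ : t₁ = sInf {ℓ : ℤ | m ≤ ℓ ∧ h₁ ℓ < m})
    (ht₂ : t₂ = sInf {ℓ : ℤ | s₂ ≤ ℓ ∧ h₂ ℓ < s₂})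
    (hb₁ : b₁ = sSup {ℓ : ℤ | 0 < h₁ ℓ})
    (hb₂ : b₂ = sSup {ℓ : ℤ | 0 < h₂ ℓ})
    (hgap₁ : ¬ (b₂ + 3 ≤ t₁ - m)) (hgap₂ : ¬ (b₁ + 3 ≤ t₂ - s₂)) :
    ∀ (h : ℤ → ℤ) (s' : ℤ), m ≤ s' → C2Admissible h s' → DecreasingType h →
      (∑ᶠ ℓ : ℤ, h ℓ) = m * n → genus h ≤ genus (hCI m n) :=
  ci_hvector_maximal_genus_general m n hm hmn
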